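/- arXiv:2410.21770 — 3 statements merged into one kernel-verified Lean document; each statement's English description precedes it below -/
import Mathlib

section
/- If P₁ᵀ ⊙ P₂ᵀ = P₃ᵀ ⊗ P₄ᵀ for selection matrices, then the masked composition satisfies vec(M(𝒰X)) = Pᵀ((P₄U₂) ⊗ (P₃U₁)) vec(X) for a suitable commutation matrix P, and, whenever (P₄U₂) ⊗ (P₃U₁) is invertible, vec((M𝒰)⁻¹X) = ((P₄U₂)⁻¹ ⊗ (P₃U₁)⁻¹) P_{m₂m₁} vec(X). -/
/-!
The factorization `P₁ᵀ ⊙ P₂ᵀ = P₃ᵀ ⊗ P₄ᵀ` says that the mask is the Kronecker product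
`P₄ ⊗ P₃` with its rows permuted by `P_{m₂m₁}ᵀ`. Together with `vec(U₁XU₂ᵀ) = (U₂ ⊗ U₁) vec X`
and the mixed-product rule this gives the first formula; the second follows by undoing the
permutation (`P_{m₂m₁} P_{m₂m₁}ᵀ = 1`) and then the invertible Kronecker factor.
-/

open Matrix
open scoped Kronecker

/-- Column-stacking vectorization of a matrix: `mvec X (j, i) = X i j`. -/
def mvec {m n : ℕ} (X : Matrix (Fin m) (Fin n) ℝ) : Fin n × Fin m → ℝ :=
  fun p => X p.2 p.1

/-- Column-wise Khatri–Rao product. -/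
def khatriRao {α β γ : Type*} (A : Matrix α γ ℝ) (B : Matrix β γ ℝ) :
    Matrix (α × β) γ ℝ :=
  Matrix.of fun p k => A p.1 k * B p.2 k

/-- The commutation matrix P_{mn} = Σᵢ Σⱼ E_{ij} ⊗ E_{ij}ᵀ. -/
def commMatrix (m n : ℕ) : Matrix (Fin m × Fin n) (Fin n × Fin m) ℝ :=
  ∑ i : Fin m, ∑ j : Fin n,
    (Matrix.single i j (1 : ℝ)) ⊗ₖ (Matrix.single i j (1 : ℝ))ᵀ

lemma commMatrix_apply (m n : ℕ) (a : Fin m) (b : Fin n) (c : Fin n) (d : Fin m) :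
    commMatrix m n (a, b) (c, d) = if c = b ∧ d = a then 1 else 0 := by
  unfold commMatrix
  simp [Matrix.sum_apply, Matrix.single, ite_and]
  aesop

lemma commMatrix_transpose_mul {κ : Type*} (m n : ℕ) (M : Matrix (Fin m × Fin n) κ ℝ) :
    (commMatrix m n)ᵀ * M = M.submatrix Prod.swap id := by
  ext ⟨c, d⟩ k
  simp [Matrix.mul_apply, Fintype.sum_prod_type, commMatrix_apply, ite_and]

lemma commMatrix_mul_transpose (m n : ℕ) : commMatrix m n * (commMatrix m n)ᵀ = 1 := by
  ext ⟨a, b⟩ ⟨c, d⟩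
  simp [Matrix.mul_apply, Fintype.sum_prod_type, commMatrix_apply, Matrix.one_apply, ite_and]
  split_ifs <;> simp_all

lemma transpose_khatriRao_eq_of_eq_kronecker {m₁ m₂ : ℕ} {α β : Type*}
    {P₁ : Matrix (Fin m₁ × Fin m₂) α ℝ} {P₂ : Matrix (Fin m₁ × Fin m₂) β ℝ}
    {P₃ : Matrix (Fin m₁) α ℝ} {P₄ : Matrix (Fin m₂) β ℝ}
    (hfac : khatriRao P₁ᵀ P₂ᵀ = P₃ᵀ ⊗ₖ P₄ᵀ) :
    (khatriRao P₂ᵀ P₁ᵀ)ᵀ = (commMatrix m₂ m₁)ᵀ * (P₄ ⊗ₖ P₃) := by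
  rw [commMatrix_transpose_mul]
  ext ⟨i, j⟩ ⟨b, a⟩
  have hentry := congrFun (congrFun hfac (a, b)) (i, j)
  simp only [khatriRao, transpose_apply, of_apply, kroneckerMap_apply] at hentry ⊢
  simpa [mul_comm] using hentry

lemma khatriRao_transpose_mulVec_mvec {n₁ n₂ m₁ m₂ : ℕ}
    {P₁ : Matrix (Fin m₁ × Fin m₂) (Fin n₁) ℝ} {P₂ : Matrix (Fin m₁ × Fin m₂) (Fin n₂) ℝ}
    {P₃ : Matrix (Fin m₁) (Fin n₁) ℝ} {P₄ : Matrix (Fin m₂) (Fin n₂) ℝ}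
    (hfac : khatriRao P₁ᵀ P₂ᵀ = P₃ᵀ ⊗ₖ P₄ᵀ)
    (U₁ : Matrix (Fin n₁) (Fin m₁) ℝ) (U₂ : Matrix (Fin n₂) (Fin m₂) ℝ)
    (X : Matrix (Fin m₁) (Fin m₂) ℝ) :
    (khatriRao P₂ᵀ P₁ᵀ)ᵀ *ᵥ mvec (U₁ * X * U₂ᵀ)
      = ((commMatrix m₂ m₁)ᵀ * ((P₄ * U₂) ⊗ₖ (P₃ * U₁))) *ᵥ mvec X := by
  have hvec : mvec (U₁ * X * U₂ᵀ) = (U₂ ⊗ₖ U₁) *ᵥ mvec X := (kronecker_mulVec_vec U₁ X U₂).symm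
  rw [hvec, transpose_khatriRao_eq_of_eq_kronecker hfac, mulVec_mulVec, Matrix.mul_assoc,
    ← mul_kronecker_mul]

theorem mask_kron_form_and_inverse_general {n₁ n₂ m₁ m₂ : ℕ}
    (U₁ : Matrix (Fin n₁) (Fin m₁) ℝ) (U₂ : Matrix (Fin n₂) (Fin m₂) ℝ)
    (P₁ : Matrix (Fin m₁ × Fin m₂) (Fin n₁) ℝ) (P₂ : Matrix (Fin m₁ × Fin m₂) (Fin n₂) ℝ)
    (P₃ : Matrix (Fin m₁) (Fin n₁) ℝ) (P₄ : Matrix (Fin m₂) (Fin n₂) ℝ)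
    (hfac : khatriRao P₁ᵀ P₂ᵀ = P₃ᵀ ⊗ₖ P₄ᵀ) :
    (∀ X : Matrix (Fin m₁) (Fin m₂) ℝ,
      (khatriRao P₂ᵀ P₁ᵀ)ᵀ *ᵥ mvec (U₁ * X * U₂ᵀ)
        = ((commMatrix m₂ m₁)ᵀ * ((P₄ * U₂) ⊗ₖ (P₃ * U₁))) *ᵥ mvec X) ∧
    (IsUnit ((P₄ * U₂) ⊗ₖ (P₃ * U₁)) →
      ∀ X Y : Matrix (Fin m₁) (Fin m₂) ℝ,
        (Matrix.of fun i j =>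
            ((khatriRao P₂ᵀ P₁ᵀ)ᵀ *ᵥ mvec (U₁ * Y * U₂ᵀ)) (i, j)) = X →
          mvec Y = ((((P₄ * U₂)⁻¹ ⊗ₖ (P₃ * U₁)⁻¹) * commMatrix m₂ m₁) *ᵥ
            fun p => X p.1 p.2)) := by
  refine ⟨khatriRao_transpose_mulVec_mvec hfac U₁ U₂, fun hK X Y hXY => ?_⟩
  set K := (P₄ * U₂) ⊗ₖ (P₃ * U₁)
  have hX : (fun p : Fin m₁ × Fin m₂ => X p.1 p.2) = ((commMatrix m₂ m₁)ᵀ * K) *ᵥ mvec Y := by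
    rw [← hXY, ← khatriRao_transpose_mulVec_mvec hfac U₁ U₂ Y]
    rfl
  rw [hX, mulVec_mulVec, ← inv_kronecker, Matrix.mul_assoc, ← Matrix.mul_assoc (commMatrix m₂ m₁),
    commMatrix_mul_transpose, one_mul, nonsing_inv_mul K ((isUnit_iff_isUnit_det K).mp hK),
    one_mulVec]

/-- If P₁ᵀ ⊙ P₂ᵀ = P₃ᵀ ⊗ P₄ᵀ for selection matrices, then
vec(M(𝒰X)) = P_{m₂m₁}ᵀ ((P₄U₂) ⊗ (P₃U₁)) vec(X), and whenever (P₄U₂) ⊗ (P₃U₁) is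
invertible, vec((M𝒰)⁻¹X) = ((P₄U₂)⁻¹ ⊗ (P₃U₁)⁻¹) P_{m₂m₁} vec(X). -/
theorem mask_kron_form_and_inverse {n₁ n₂ m₁ m₂ : ℕ}
    (U₁ : Matrix (Fin n₁) (Fin m₁) ℝ) (U₂ : Matrix (Fin n₂) (Fin m₂) ℝ)
    (P₁ : Matrix (Fin m₁ × Fin m₂) (Fin n₁) ℝ) (P₂ : Matrix (Fin m₁ × Fin m₂) (Fin n₂) ℝ)
    (P₃ : Matrix (Fin m₁) (Fin n₁) ℝ) (P₄ : Matrix (Fin m₂) (Fin n₂) ℝ)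
    (hP₁ : ∀ a, ∃ s, ∀ t, P₁ a t = if t = s then 1 else 0)
    (hP₂ : ∀ a, ∃ s, ∀ t, P₂ a t = if t = s then 1 else 0)
    (hP₃ : ∀ a, ∃ s, ∀ t, P₃ a t = if t = s then 1 else 0)
    (hP₄ : ∀ a, ∃ s, ∀ t, P₄ a t = if t = s then 1 else 0)
    (hfac : khatriRao P₁ᵀ P₂ᵀ = P₃ᵀ ⊗ₖ P₄ᵀ) :
    (∀ X : Matrix (Fin m₁) (Fin m₂) ℝ,
      (khatriRao P₂ᵀ P₁ᵀ)ᵀ *ᵥ mvec (U₁ * X * U₂ᵀ)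
        = ((commMatrix m₂ m₁)ᵀ * ((P₄ * U₂) ⊗ₖ (P₃ * U₁))) *ᵥ mvec X) ∧
    (IsUnit ((P₄ * U₂) ⊗ₖ (P₃ * U₁)) →
      ∀ X Y : Matrix (Fin m₁) (Fin m₂) ℝ,
        (Matrix.of fun i j =>
            ((khatriRao P₂ᵀ P₁ᵀ)ᵀ *ᵥ mvec (U₁ * Y * U₂ᵀ)) (i, j)) = X →
          mvec Y = ((((P₄ * U₂)⁻¹ ⊗ₖ (P₃ * U₁)⁻¹) * commMatrix m₂ m₁) *ᵥ
            fun p => X p.1 p.2)) :=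
  mask_kron_form_and_inverse_general U₁ U₂ P₁ P₂ P₃ P₄ hfac
end

section
/- Two-sided interpolation exactness: let U₁ ∈ ℝ^{n₁×m₁}, U₂ ∈ ℝ^{n₂×m₂} and selection matrices P₅ ∈ ℝ^{m₁×n₁}, P₆ ∈ ℝ^{m₂×n₂} with P₅U₁ and P₆U₂ invertible. Define Ã = U₁(P₅U₁)⁻¹(P₅ A P₆ᵀ)(U₂(P₆U₂)⁻¹)ᵀ for A ∈ ℝ^{n₁×n₂}. Then P₅ Ã P₆ᵀ = P₅ A P₆ᵀ, and if A = U₁ C U₂ᵀ for some C ∈ ℝ^{m₁×m₂}, then Ã = A. -/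
open Matrix

/-- Two-sided interpolation exactness of the TEIM/two-sided-DEIM approximation
Ã = U₁(P₅U₁)⁻¹(P₅ A P₆ᵀ)(U₂(P₆U₂)⁻¹)ᵀ: it interpolates A on the selected grid,
and reproduces exactly any A of the form U₁ C U₂ᵀ. -/
theorem teim_two_sided_exactness {n₁ n₂ m₁ m₂ : ℕ}
    (U₁ : Matrix (Fin n₁) (Fin m₁) ℝ) (U₂ : Matrix (Fin n₂) (Fin m₂) ℝ)
    (P₅ : Matrix (Fin m₁) (Fin n₁) ℝ) (P₆ : Matrix (Fin m₂) (Fin n₂) ℝ)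
    (hP₅ : ∃ f : Fin m₁ → Fin n₁, Function.Injective f ∧
      ∀ i t, P₅ i t = if t = f i then 1 else 0)
    (hP₆ : ∃ g : Fin m₂ → Fin n₂, Function.Injective g ∧
      ∀ i t, P₆ i t = if t = g i then 1 else 0)
    (h₅ : IsUnit (P₅ * U₁)) (h₆ : IsUnit (P₆ * U₂))
    (A : Matrix (Fin n₁) (Fin n₂) ℝ) :
    (P₅ * (U₁ * (P₅ * U₁)⁻¹ * (P₅ * A * P₆ᵀ) * (U₂ * (P₆ * U₂)⁻¹)ᵀ) * P₆ᵀ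
        = P₅ * A * P₆ᵀ) ∧
    (∀ C : Matrix (Fin m₁) (Fin m₂) ℝ, A = U₁ * C * U₂ᵀ →
      U₁ * (P₅ * U₁)⁻¹ * (P₅ * A * P₆ᵀ) * (U₂ * (P₆ * U₂)⁻¹)ᵀ = A) := by
  have hB : (P₅ * U₁) * (P₅ * U₁)⁻¹ = 1 :=
    Matrix.mul_nonsing_inv _ ((Matrix.isUnit_iff_isUnit_det _).mp h₅)
  have hB' : (P₅ * U₁)⁻¹ * (P₅ * U₁) = 1 :=
    Matrix.nonsing_inv_mul _ ((Matrix.isUnit_iff_isUnit_det _).mp h₅)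
  have hD : (P₆ * U₂) * (P₆ * U₂)⁻¹ = 1 :=
    Matrix.mul_nonsing_inv _ ((Matrix.isUnit_iff_isUnit_det _).mp h₆)
  have hD' : (P₆ * U₂)⁻¹ * (P₆ * U₂) = 1 :=
    Matrix.nonsing_inv_mul _ ((Matrix.isUnit_iff_isUnit_det _).mp h₆)
  have h1 : P₅ * (U₁ * (P₅ * U₁)⁻¹) = 1 := by rw [← Matrix.mul_assoc, hB]
  have h2 : (U₂ * (P₆ * U₂)⁻¹)ᵀ * P₆ᵀ = 1 := by
    rw [← Matrix.transpose_mul, ← Matrix.mul_assoc, hD, Matrix.transpose_one]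
  constructor
  · calc P₅ * (U₁ * (P₅ * U₁)⁻¹ * (P₅ * A * P₆ᵀ) * (U₂ * (P₆ * U₂)⁻¹)ᵀ) * P₆ᵀ
        = (P₅ * (U₁ * (P₅ * U₁)⁻¹)) * ((P₅ * A * P₆ᵀ) * ((U₂ * (P₆ * U₂)⁻¹)ᵀ * P₆ᵀ)) := by
          simp only [Matrix.mul_assoc]
      _ = P₅ * A * P₆ᵀ := by rw [h1, h2, Matrix.one_mul, Matrix.mul_one]
  · intro C hC
    subst hC
    have h2' : U₂ᵀ * (P₆ᵀ * (((P₆ * U₂)⁻¹)ᵀ * U₂ᵀ)) = U₂ᵀ := by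
      rw [← Matrix.mul_assoc, ← Matrix.mul_assoc, ← Matrix.transpose_mul,
        ← Matrix.transpose_mul, hD', Matrix.transpose_one, Matrix.one_mul]
    calc U₁ * (P₅ * U₁)⁻¹ * (P₅ * (U₁ * C * U₂ᵀ) * P₆ᵀ) * (U₂ * (P₆ * U₂)⁻¹)ᵀ
        = U₁ * ((P₅ * U₁)⁻¹ * (P₅ * U₁)) *
            (C * (U₂ᵀ * (P₆ᵀ * (((P₆ * U₂)⁻¹)ᵀ * U₂ᵀ)))) := by
          simp only [Matrix.transpose_mul, Matrix.mul_assoc]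
      _ = U₁ * C * U₂ᵀ := by rw [hB', Matrix.mul_one, h2', Matrix.mul_assoc]
end

section
/- Two-sided orthogonal projection error decomposition: let Z = [Z₁ Z₂] ∈ ℝ^{n₁×n₁} and V = [V₁ V₂] ∈ ℝ^{n₂×n₂} be orthogonal matrices, A = Z C Vᵀ with C ∈ ℝ^{n₁×n₂} partitioned conformally as [[C₁₁,C₁₂],[C₂₁,C₂₂]]. Suppose P₅Z₁ and P₆V₁ are invertible for selection matrices P₅, P₆. Then the TEIM approximation Ã = Z₁(P₅Z₁)⁻¹(P₅ A P₆ᵀ)(V₁(P₆V₁)⁻¹)ᵀ equals Z₁C₁₁V₁ᵀ + Z₁(P₅Z₁)⁻¹(P₅Z₂)C₂₁V₁ᵀ + Z₁C₁₂(V₁(P₆V₁)⁻¹(P₆V₂))ᵀ + Z₁(P₅Z₁)⁻¹(P₅Z₂)C₂₂(V₁(P₆V₁)⁻¹(P₆V₂))ᵀ. -/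
/-!
Both interpolation operators are oblique projections: `X ↦ Z₁ (P₅ Z₁)⁻¹ P₅ X` fixes every
matrix `Z₁ N`, and `Y ↦ Y P₆ᵀ (V₁ (P₆ V₁)⁻¹)ᵀ` fixes every `N V₁ᵀ`. Expanding
`A = Z C Vᵀ` into its four block terms `Zᵢ Cᵢⱼ Vⱼᵀ`, the sandwich acts on each term separately;
it leaves `Z₁ C₁₁ V₁ᵀ` unchanged and replaces `Z₂` by `Z₁ (P₅ Z₁)⁻¹ P₅ Z₂` and `V₂` by
`V₁ (P₆ V₁)⁻¹ P₆ V₂` in the other three.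
-/

open Matrix

namespace Matrix

variable {α : Type*} {k l m n p q r s t : Type*}
  [Fintype m] [Fintype n] [Fintype p] [Fintype q] [Fintype r] [Fintype s] [Fintype t]

theorem fromCols_mul_fromBlocks_mul_transpose_fromCols [CommSemiring α]
    (Z₁ : Matrix k m α) (Z₂ : Matrix k n α) (V₁ : Matrix l p α) (V₂ : Matrix l q α)
    (C₁₁ : Matrix m p α) (C₁₂ : Matrix m q α) (C₂₁ : Matrix n p α) (C₂₂ : Matrix n q α) :
    fromCols Z₁ Z₂ * fromBlocks C₁₁ C₁₂ C₂₁ C₂₂ * (fromCols V₁ V₂)ᵀ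
      = Z₁ * C₁₁ * V₁ᵀ + Z₂ * C₂₁ * V₁ᵀ + Z₁ * C₁₂ * V₂ᵀ + Z₂ * C₂₂ * V₂ᵀ := by
  rw [fromCols_mul_fromBlocks, transpose_fromCols, fromCols_mul_fromRows]
  simp only [Matrix.add_mul]
  abel

theorem mul_mul_sandwich_mul_transpose [CommSemiring α]
    (Z : Matrix k r α) (M : Matrix r s α) (P : Matrix s m α) (X : Matrix m n α)
    (N : Matrix n p α) (Y : Matrix q p α) (Q : Matrix t q α) (W : Matrix l t α) :
    Z * M * (P * (X * N * Yᵀ) * Qᵀ) * Wᵀ = Z * M * (P * X) * N * (W * (Q * Y))ᵀ := by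
  simp only [transpose_mul, Matrix.mul_assoc]

end Matrix

theorem teim_error_decomposition_general {n₁ n₂ m₁ m₂ p₁ p₂ : ℕ}
    (Z₁ : Matrix (Fin n₁) (Fin m₁) ℝ) (Z₂ : Matrix (Fin n₁) (Fin p₁) ℝ)
    (V₁ : Matrix (Fin n₂) (Fin m₂) ℝ) (V₂ : Matrix (Fin n₂) (Fin p₂) ℝ)
    (C₁₁ : Matrix (Fin m₁) (Fin m₂) ℝ) (C₁₂ : Matrix (Fin m₁) (Fin p₂) ℝ)
    (C₂₁ : Matrix (Fin p₁) (Fin m₂) ℝ) (C₂₂ : Matrix (Fin p₁) (Fin p₂) ℝ)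
    (P₅ : Matrix (Fin m₁) (Fin n₁) ℝ) (P₆ : Matrix (Fin m₂) (Fin n₂) ℝ)
    (h₅ : IsUnit (P₅ * Z₁)) (h₆ : IsUnit (P₆ * V₁))
    (A : Matrix (Fin n₁) (Fin n₂) ℝ)
    (hA : A = fromCols Z₁ Z₂ * fromBlocks C₁₁ C₁₂ C₂₁ C₂₂ * (fromCols V₁ V₂)ᵀ) :
    Z₁ * (P₅ * Z₁)⁻¹ * (P₅ * A * P₆ᵀ) * (V₁ * (P₆ * V₁)⁻¹)ᵀ
      = Z₁ * C₁₁ * V₁ᵀ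
        + Z₁ * (P₅ * Z₁)⁻¹ * (P₅ * Z₂) * C₂₁ * V₁ᵀ
        + Z₁ * C₁₂ * (V₁ * (P₆ * V₁)⁻¹ * (P₆ * V₂))ᵀ
        + Z₁ * (P₅ * Z₁)⁻¹ * (P₅ * Z₂) * C₂₂ * (V₁ * (P₆ * V₁)⁻¹ * (P₆ * V₂))ᵀ := by
  have hZ₁ : Z₁ * (P₅ * Z₁)⁻¹ * (P₅ * Z₁) = Z₁ :=
    nonsing_inv_mul_cancel_right _ _ ((isUnit_iff_isUnit_det _).mp h₅)
  have hV₁ : V₁ * (P₆ * V₁)⁻¹ * (P₆ * V₁) = V₁ :=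
    nonsing_inv_mul_cancel_right _ _ ((isUnit_iff_isUnit_det _).mp h₆)
  rw [hA, fromCols_mul_fromBlocks_mul_transpose_fromCols]
  simp only [Matrix.mul_add, Matrix.add_mul, mul_mul_sandwich_mul_transpose, hZ₁, hV₁]

/-- Two-sided orthogonal projection error decomposition of the TEIM approximation for
A = Z C Vᵀ with Z = [Z₁ Z₂], V = [V₁ V₂] orthogonal and C partitioned in blocks. -/
theorem teim_error_decomposition {n₁ n₂ m₁ m₂ p₁ p₂ : ℕ}
    (Z₁ : Matrix (Fin n₁) (Fin m₁) ℝ) (Z₂ : Matrix (Fin n₁) (Fin p₁) ℝ)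
    (V₁ : Matrix (Fin n₂) (Fin m₂) ℝ) (V₂ : Matrix (Fin n₂) (Fin p₂) ℝ)
    (C₁₁ : Matrix (Fin m₁) (Fin m₂) ℝ) (C₁₂ : Matrix (Fin m₁) (Fin p₂) ℝ)
    (C₂₁ : Matrix (Fin p₁) (Fin m₂) ℝ) (C₂₂ : Matrix (Fin p₁) (Fin p₂) ℝ)
    (P₅ : Matrix (Fin m₁) (Fin n₁) ℝ) (P₆ : Matrix (Fin m₂) (Fin n₂) ℝ)
    (hP₅ : ∃ f : Fin m₁ → Fin n₁, Function.Injective f ∧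
      ∀ i t, P₅ i t = if t = f i then 1 else 0)
    (hP₆ : ∃ g : Fin m₂ → Fin n₂, Function.Injective g ∧
      ∀ i t, P₆ i t = if t = g i then 1 else 0)
    (hZ₁ : (fromCols Z₁ Z₂)ᵀ * fromCols Z₁ Z₂ = 1)
    (hZ₂ : fromCols Z₁ Z₂ * (fromCols Z₁ Z₂)ᵀ = 1)
    (hV₁ : (fromCols V₁ V₂)ᵀ * fromCols V₁ V₂ = 1)
    (hV₂ : fromCols V₁ V₂ * (fromCols V₁ V₂)ᵀ = 1)
    (h₅ : IsUnit (P₅ * Z₁)) (h₆ : IsUnit (P₆ * V₁))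
    (A : Matrix (Fin n₁) (Fin n₂) ℝ)
    (hA : A = fromCols Z₁ Z₂ * fromBlocks C₁₁ C₁₂ C₂₁ C₂₂ * (fromCols V₁ V₂)ᵀ) :
    Z₁ * (P₅ * Z₁)⁻¹ * (P₅ * A * P₆ᵀ) * (V₁ * (P₆ * V₁)⁻¹)ᵀ
      = Z₁ * C₁₁ * V₁ᵀ
        + Z₁ * (P₅ * Z₁)⁻¹ * (P₅ * Z₂) * C₂₁ * V₁ᵀ
        + Z₁ * C₁₂ * (V₁ * (P₆ * V₁)⁻¹ * (P₆ * V₂))ᵀ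
        + Z₁ * (P₅ * Z₁)⁻¹ * (P₅ * Z₂) * C₂₂ * (V₁ * (P₆ * V₁)⁻¹ * (P₆ * V₂))ᵀ :=
  teim_error_decomposition_general Z₁ Z₂ V₁ V₂ C₁₁ C₁₂ C₂₁ C₂₂ P₅ P₆ h₅ h₆ A hA
end
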